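/- Let A → M be a Lie algebroid with anchor ρ and bracket [[-,-]], B ⊂ A a Lie subalgebroid, and ∇ a flat connection on A/B such that the sheaf Γ_∇ of sections X of A with X mod B ∇-flat forms a Lie subalgebra containing Γ(B) as an ideal. Define R(X,Y)(Z mod B) := ([∇^{A/B}_X, ∇^{A/B}_Y] − ∇^{A/B}_{[[X,Y]]})(Z mod B), where ∇^{A/B}_X(Y mod B) = ∇_{ρ(Y)}(X mod B) − [[Y,X]] mod B. Then R(X,Y) = 0 for all X, Y ∈ Γ(A); i.e., ∇^{A/B} is flat. -/

import Mathlib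

/-!
The curvature of an `A`-connection is `C^∞(M)`-linear in `X` and `Y`, so it vanishes once it
vanishes for `X, Y` in a generating set. The flat sections `Γ_∇` contain `Γ(B)` and generate
`Γ(A/B)`, hence generate `Γ(A)`. For `X ∈ Γ_∇` and any `Z` one has
`∇^{A/B}_X (Z mod B) = [[X, Z]] mod B`; as `Γ_∇` is closed under the bracket, `R(X, Y)(Z mod B)`
for `X, Y ∈ Γ_∇` is the Jacobiator of `X, Y, Z` modulo `B`.
-/

theorem Submodule.span_eq_top_of_span_image_mkQ {R M : Type*} [Ring R] [AddCommGroup M]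
    [Module R M] (p : Submodule R M) {s : Set M} (hps : (p : Set M) ⊆ s)
    (hs : span R (p.mkQ '' s) = ⊤) : span R s = ⊤ := by
  have hp : p ≤ span R s := hps.trans subset_span
  rw [← sup_eq_right.mpr hp, ← comap_map_mkQ, map_span, hs, comap_top]

section

variable {𝕜 R L E : Type*} [CommRing 𝕜] [CommRing R] [Algebra 𝕜 R]
  [AddCommGroup L] [Module R L] [AddCommGroup E] [Module R E]

structure IsLieAlgebroid (ρ : L →ₗ[R] Derivation 𝕜 R R) (br : L → L → L) : Prop where
  add_left : ∀ X Y Z, br (X + Y) Z = br X Z + br Y Z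
  add_right : ∀ X Y Z, br X (Y + Z) = br X Y + br X Z
  anti : ∀ X Y, br X Y = -br Y X
  jacobi : ∀ X Y Z, br X (br Y Z) = br (br X Y) Z + br Y (br X Z)
  leibniz : ∀ X (f : R) Y, br X (f • Y) = ρ X f • Y + f • br X Y

/-- For `ρ = LinearMap.id` this is an ordinary connection. -/
structure IsConnection (ρ : L →ₗ[R] Derivation 𝕜 R R) (D : L → E → E) : Prop where
  add_left : ∀ X Y e, D (X + Y) e = D X e + D Y e
  smul_left : ∀ (f : R) X e, D (f • X) e = f • D X e
  add_right : ∀ X e e', D X (e + e') = D X e + D X e'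
  leibniz : ∀ X (f : R) e, D X (f • e) = ρ X f • e + f • D X e

def curvature (br : L → L → L) (D : L → E → E) (X Y : L) (e : E) : E :=
  D X (D Y e) - D Y (D X e) - D (br X Y) e

variable {ρ : L →ₗ[R] Derivation 𝕜 R R} {br : L → L → L} {D : L → E → E}

theorem IsLieAlgebroid.smul_left (hbr : IsLieAlgebroid ρ br) (f : R) (X Y : L) :
    br (f • X) Y = f • br X Y - ρ Y f • X := by
  rw [hbr.anti, hbr.leibniz, hbr.anti Y X, smul_neg]
  abel

namespace IsConnection

theorem map_zero_right (hD : IsConnection ρ D) (X : L) : D X 0 = 0 := by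
  simpa using hD.add_right X 0 0

theorem neg_left (hD : IsConnection ρ D) (X : L) (e : E) : D (-X) e = -D X e := by
  simpa using hD.smul_left (-1) X e

theorem curvature_add_left (hbr : IsLieAlgebroid ρ br) (hD : IsConnection ρ D) (X X' Y : L)
    (e : E) : curvature br D (X + X') Y e = curvature br D X Y e + curvature br D X' Y e := by
  simp only [curvature, hbr.add_left, hD.add_left, hD.add_right]
  abel

theorem curvature_smul_left (hbr : IsLieAlgebroid ρ br) (hD : IsConnection ρ D) (f : R)
    (X Y : L) (e : E) : curvature br D (f • X) Y e = f • curvature br D X Y e := by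
  rw [curvature, curvature, hbr.smul_left, sub_eq_add_neg (f • _), ← neg_smul, hD.add_left]
  simp only [hD.smul_left, hD.leibniz]
  module

theorem curvature_swap (hbr : IsLieAlgebroid ρ br) (hD : IsConnection ρ D) (X Y : L) (e : E) :
    curvature br D X Y e = -curvature br D Y X e := by
  simp only [curvature, hbr.anti X Y, hD.neg_left]
  abel

theorem curvature_eq_zero_of_span_eq_top (hbr : IsLieAlgebroid ρ br) (hD : IsConnection ρ D)
    {s : Set L} (hs : Submodule.span R s = ⊤) (e : E)
    (h : ∀ X ∈ s, ∀ Y ∈ s, curvature br D X Y e = 0) (X Y : L) :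
    curvature br D X Y e = 0 := by
  let Ω : L →ₗ[R] L →ₗ[R] E := LinearMap.mk₂ R (fun X Y => curvature br D X Y e)
    (fun X X' Y => hD.curvature_add_left hbr X X' Y e)
    (fun f X Y => hD.curvature_smul_left hbr f X Y e)
    (fun X Y Y' => by
      simp only [hD.curvature_swap hbr X, hD.curvature_add_left hbr, neg_add])
    (fun f X Y => by simp only [hD.curvature_swap hbr X, hD.curvature_smul_left hbr, smul_neg])
  have hΩ : Ω = 0 := LinearMap.ext_on hs fun X hX => LinearMap.ext_on hs fun Y hY => h X hX Y hY
  exact congr($hΩ X Y)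

end IsConnection

section Foliation

variable {B : Submodule R L} {nabla : Derivation 𝕜 R R → L ⧸ B → L ⧸ B}

variable (B nabla) in
/-- The sheaf `Γ_∇`. -/
def flatSections : Set L :=
  {X | ∀ Z, nabla Z (Submodule.Quotient.mk X) = 0}

theorem submodule_subset_flatSections (hnabla : IsConnection LinearMap.id nabla) :
    (B : Set L) ⊆ flatSections B nabla := fun X hX Z => by
  rw [(Submodule.Quotient.mk_eq_zero B).mpr hX]
  exact hnabla.map_zero_right Z

variable {D : L → L ⧸ B → L ⧸ B}

theorem IsConnection.of_apply_mk (hbr : IsLieAlgebroid ρ br)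
    (hnabla : IsConnection LinearMap.id nabla)
    (hD : ∀ X Y, D X (Submodule.Quotient.mk Y)
      = nabla (ρ Y) (Submodule.Quotient.mk X) - Submodule.Quotient.mk (br Y X)) :
    IsConnection ρ D where
  add_left X X' q := by
    obtain ⟨Y, rfl⟩ := Submodule.Quotient.mk_surjective B q
    rw [hD, hD, hD, Submodule.Quotient.mk_add, hnabla.add_right, hbr.add_right,
      Submodule.Quotient.mk_add]
    abel
  smul_left f X q := by
    obtain ⟨Y, rfl⟩ := Submodule.Quotient.mk_surjective B q
    rw [hD, hD, Submodule.Quotient.mk_smul, hnabla.leibniz, hbr.leibniz, LinearMap.id_apply,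
      Submodule.Quotient.mk_add, Submodule.Quotient.mk_smul, Submodule.Quotient.mk_smul]
    module
  add_right X q q' := by
    obtain ⟨Y, rfl⟩ := Submodule.Quotient.mk_surjective B q
    obtain ⟨Y', rfl⟩ := Submodule.Quotient.mk_surjective B q'
    rw [← Submodule.Quotient.mk_add, hD, hD, hD, map_add, hnabla.add_left, hbr.add_left,
      Submodule.Quotient.mk_add]
    abel
  leibniz X f q := by
    obtain ⟨Y, rfl⟩ := Submodule.Quotient.mk_surjective B q
    rw [← Submodule.Quotient.mk_smul, hD, hD, map_smul, hnabla.smul_left, hbr.smul_left]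
    simp only [Submodule.Quotient.mk_sub, Submodule.Quotient.mk_smul, smul_sub]
    abel

theorem apply_mk_of_mem_flatSections (hbr : IsLieAlgebroid ρ br)
    (hD : ∀ X Y, D X (Submodule.Quotient.mk Y)
      = nabla (ρ Y) (Submodule.Quotient.mk X) - Submodule.Quotient.mk (br Y X))
    {X : L} (hX : X ∈ flatSections B nabla) (Y : L) :
    D X (Submodule.Quotient.mk Y) = Submodule.Quotient.mk (br X Y) := by
  rw [hD, hX, zero_sub, hbr.anti Y X, Submodule.Quotient.mk_neg, neg_neg]

theorem curvature_mk_eq_zero_of_mem_flatSections (hbr : IsLieAlgebroid ρ br)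
    (hD : ∀ X Y, D X (Submodule.Quotient.mk Y)
      = nabla (ρ Y) (Submodule.Quotient.mk X) - Submodule.Quotient.mk (br Y X))
    (hflat_br : ∀ X Y, X ∈ flatSections B nabla → Y ∈ flatSections B nabla →
      br X Y ∈ flatSections B nabla)
    {X Y : L} (hX : X ∈ flatSections B nabla) (hY : Y ∈ flatSections B nabla) (Z : L) :
    curvature br D X Y (Submodule.Quotient.mk Z) = 0 := by
  simp only [curvature, apply_mk_of_mem_flatSections hbr hD hX,
    apply_mk_of_mem_flatSections hbr hD hY,
    apply_mk_of_mem_flatSections hbr hD (hflat_br X Y hX hY), ← Submodule.Quotient.mk_sub,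
    hbr.jacobi X Y Z, add_sub_cancel_right, sub_self]

end Foliation

end

theorem im_foliation_induced_connection_flat_general
    {R ΓA : Type*} [CommRing R] [Algebra ℝ R]
    [AddCommGroup ΓA] [Module R ΓA]
    (ρ : ΓA →ₗ[R] Derivation ℝ R R)
    (br : ΓA → ΓA → ΓA)
    (hbr_add₁ : ∀ X Y Z : ΓA, br (X + Y) Z = br X Z + br Y Z)
    (hbr_add₂ : ∀ X Y Z : ΓA, br X (Y + Z) = br X Y + br X Z)
    (hbr_anti : ∀ X Y : ΓA, br X Y = - br Y X)
    (hbr_jacobi : ∀ X Y Z : ΓA, br X (br Y Z) = br (br X Y) Z + br Y (br X Z))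
    (hbr_leib : ∀ (X : ΓA) (f : R) (Y : ΓA), br X (f • Y) = (ρ X) f • Y + f • br X Y)
    (B : Submodule R ΓA)
    (nabla : Derivation ℝ R R → (ΓA ⧸ B) → (ΓA ⧸ B))
    (hnabla_addZ : ∀ (Z W : Derivation ℝ R R) (q : ΓA ⧸ B),
      nabla (Z + W) q = nabla Z q + nabla W q)
    (hnabla_smulZ : ∀ (f : R) (Z : Derivation ℝ R R) (q : ΓA ⧸ B),
      nabla (f • Z) q = f • nabla Z q)
    (hnabla_addq : ∀ (Z : Derivation ℝ R R) (q q' : ΓA ⧸ B),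
      nabla Z (q + q') = nabla Z q + nabla Z q')
    (hnabla_leib : ∀ (Z : Derivation ℝ R R) (f : R) (q : ΓA ⧸ B),
      nabla Z (f • q) = Z f • q + f • nabla Z q)
    -- IM foliation: flat-mod-B sections form a Lie subalgebra with Γ(B) as ideal,
    -- and their classes generate Γ(A/B)
    (hflat_sub : ∀ X Y : ΓA, (∀ Z, nabla Z (Submodule.Quotient.mk X) = 0) →
      (∀ Z, nabla Z (Submodule.Quotient.mk Y) = 0) →
      (∀ Z, nabla Z (Submodule.Quotient.mk (br X Y)) = 0))
    (hgen : Submodule.span R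
      ((Submodule.Quotient.mk : ΓA → ΓA ⧸ B) ''
        {X : ΓA | ∀ Z, nabla Z (Submodule.Quotient.mk X) = 0}) = ⊤)
    -- the induced A-connection ∇^{A/B}
    (nablaAB : ΓA → (ΓA ⧸ B) → (ΓA ⧸ B))
    (hAB : ∀ X Y : ΓA, nablaAB X (Submodule.Quotient.mk Y)
      = nabla (ρ Y) (Submodule.Quotient.mk X) - Submodule.Quotient.mk (br Y X)) :
    ∀ X Y Z : ΓA,
      nablaAB X (nablaAB Y (Submodule.Quotient.mk Z))
        - nablaAB Y (nablaAB X (Submodule.Quotient.mk Z))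
        = nablaAB (br X Y) (Submodule.Quotient.mk Z) := by
  intro X Y Z
  have hbr : IsLieAlgebroid ρ br := ⟨hbr_add₁, hbr_add₂, hbr_anti, hbr_jacobi, hbr_leib⟩
  have hnabla : IsConnection LinearMap.id nabla :=
    ⟨hnabla_addZ, hnabla_smulZ, hnabla_addq, hnabla_leib⟩
  have hspan : Submodule.span R (flatSections B nabla) = ⊤ :=
    B.span_eq_top_of_span_image_mkQ (submodule_subset_flatSections hnabla) hgen
  have hcurv := (IsConnection.of_apply_mk hbr hnabla hAB).curvature_eq_zero_of_span_eq_top hbr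
    hspan (Submodule.Quotient.mk Z)
    (fun X hX Y hY => curvature_mk_eq_zero_of_mem_flatSections hbr hAB hflat_sub hX hY Z) X Y
  exact sub_eq_zero.mp hcurv

/-- With an IM foliation `(TM, B, ∇)` of a Lie algebroid `A` over `TM`, the
induced `A`-connection `∇^{A/B}` on `A/B`, defined by
`∇^{A/B}_X(Y mod B) = ∇_{ρY}(X mod B) − [[Y,X]] mod B`, is flat:
`R(X,Y) = [∇^{A/B}_X, ∇^{A/B}_Y] − ∇^{A/B}_{[[X,Y]]} = 0`. -/
theorem im_foliation_induced_connection_flat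
    {R ΓA : Type*} [CommRing R] [Algebra ℝ R]
    [AddCommGroup ΓA] [Module R ΓA]
    (ρ : ΓA →ₗ[R] Derivation ℝ R R)
    (br : ΓA → ΓA → ΓA)
    (hbr_add₁ : ∀ X Y Z : ΓA, br (X + Y) Z = br X Z + br Y Z)
    (hbr_add₂ : ∀ X Y Z : ΓA, br X (Y + Z) = br X Y + br X Z)
    (hbr_anti : ∀ X Y : ΓA, br X Y = - br Y X)
    (hbr_jacobi : ∀ X Y Z : ΓA, br X (br Y Z) = br (br X Y) Z + br Y (br X Z))
    (hbr_leib : ∀ (X : ΓA) (f : R) (Y : ΓA), br X (f • Y) = (ρ X) f • Y + f • br X Y)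
    (hanchor : ∀ X Y : ΓA, ρ (br X Y) = ⁅ρ X, ρ Y⁆)
    (B : Submodule R ΓA)
    (hB_sub : ∀ X Y : ΓA, X ∈ B → Y ∈ B → br X Y ∈ B)
    (nabla : Derivation ℝ R R → (ΓA ⧸ B) → (ΓA ⧸ B))
    (hnabla_addZ : ∀ (Z W : Derivation ℝ R R) (q : ΓA ⧸ B),
      nabla (Z + W) q = nabla Z q + nabla W q)
    (hnabla_smulZ : ∀ (f : R) (Z : Derivation ℝ R R) (q : ΓA ⧸ B),
      nabla (f • Z) q = f • nabla Z q)
    (hnabla_addq : ∀ (Z : Derivation ℝ R R) (q q' : ΓA ⧸ B),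
      nabla Z (q + q') = nabla Z q + nabla Z q')
    (hnabla_leib : ∀ (Z : Derivation ℝ R R) (f : R) (q : ΓA ⧸ B),
      nabla Z (f • q) = Z f • q + f • nabla Z q)
    (hnabla_flat : ∀ (Z W : Derivation ℝ R R) (q : ΓA ⧸ B),
      nabla Z (nabla W q) - nabla W (nabla Z q) = nabla ⁅Z, W⁆ q)
    -- IM foliation: flat-mod-B sections form a Lie subalgebra with Γ(B) as ideal,
    -- and their classes generate Γ(A/B)
    (hflat_sub : ∀ X Y : ΓA, (∀ Z, nabla Z (Submodule.Quotient.mk X) = 0) →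
      (∀ Z, nabla Z (Submodule.Quotient.mk Y) = 0) →
      (∀ Z, nabla Z (Submodule.Quotient.mk (br X Y)) = 0))
    (hflat_ideal : ∀ X Y : ΓA, (∀ Z, nabla Z (Submodule.Quotient.mk X) = 0) →
      Y ∈ B → br X Y ∈ B)
    (hgen : Submodule.span R
      ((Submodule.Quotient.mk : ΓA → ΓA ⧸ B) ''
        {X : ΓA | ∀ Z, nabla Z (Submodule.Quotient.mk X) = 0}) = ⊤)
    -- the induced A-connection ∇^{A/B}
    (nablaAB : ΓA → (ΓA ⧸ B) → (ΓA ⧸ B))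
    (hAB : ∀ X Y : ΓA, nablaAB X (Submodule.Quotient.mk Y)
      = nabla (ρ Y) (Submodule.Quotient.mk X) - Submodule.Quotient.mk (br Y X)) :
    ∀ X Y Z : ΓA,
      nablaAB X (nablaAB Y (Submodule.Quotient.mk Z))
        - nablaAB Y (nablaAB X (Submodule.Quotient.mk Z))
        = nablaAB (br X Y) (Submodule.Quotient.mk Z) :=
  im_foliation_induced_connection_flat_general ρ br hbr_add₁ hbr_add₂ hbr_anti hbr_jacobi hbr_leib B
    nabla hnabla_addZ hnabla_smulZ hnabla_addq hnabla_leib hflat_sub hgen nablaAB hAB
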